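/- For a two-neighbor inverse-distance estimate with distances d₁ < d₂ (both positive) and loads λ₁, λ₂, the estimate λ̂(n) = (λ₁/d₁^n + λ₂/d₂^n)/(1/d₁^n + 1/d₂^n) satisfies |λ̂(n) − λ₁| = |λ₂ − λ₁| · (d₁/d₂)^n / (1 + (d₁/d₂)^n), which is strictly decreasing in n when λ₁ ≠ λ₂, and tends to 0 as n → ∞. -/
import Mathlib


theorem stmt_13 (d₁ d₂ l1 l2 : ℝ) (hd₁ : 0 < d₁) (hd : d₁ < d₂) :
    (∀ n : ℝ,
      |(l1 / d₁ ^ n + l2 / d₂ ^ n) / (1 / d₁ ^ n + 1 / d₂ ^ n) - l1|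
        = |l2 - l1| * (d₁ / d₂) ^ n / (1 + (d₁ / d₂) ^ n)) ∧
    (l1 ≠ l2 →
      StrictAnti (fun n : ℝ =>
        |(l1 / d₁ ^ n + l2 / d₂ ^ n) / (1 / d₁ ^ n + 1 / d₂ ^ n) - l1|)) ∧
    Filter.Tendsto (fun n : ℝ =>
        |(l1 / d₁ ^ n + l2 / d₂ ^ n) / (1 / d₁ ^ n + 1 / d₂ ^ n) - l1|)
      Filter.atTop (nhds 0) := by
  have hd₂ : 0 < d₂ := hd₁.trans hd
  have hr0 : 0 < d₁ / d₂ := div_pos hd₁ hd₂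
  have hr1 : d₁ / d₂ < 1 := (div_lt_one hd₂).mpr hd
  have hrp : ∀ n : ℝ, 0 < (d₁ / d₂) ^ n := fun n => Real.rpow_pos_of_pos hr0 n
  have key : ∀ n : ℝ, (l1 / d₁ ^ n + l2 / d₂ ^ n) / (1 / d₁ ^ n + 1 / d₂ ^ n) - l1
      = (l2 - l1) * (d₁ / d₂) ^ n / (1 + (d₁ / d₂) ^ n) := by
    intro n
    have ha : (0:ℝ) < d₁ ^ n := Real.rpow_pos_of_pos hd₁ n
    have hb : (0:ℝ) < d₂ ^ n := Real.rpow_pos_of_pos hd₂ n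
    have hsum : (0:ℝ) < 1 / d₁ ^ n + 1 / d₂ ^ n := by positivity
    have hden : (0:ℝ) < 1 + (d₁ / d₂) ^ n := by positivity
    rw [Real.div_rpow hd₁.le hd₂.le]
    field_simp
    ring
  have habs : ∀ n : ℝ,
      |(l1 / d₁ ^ n + l2 / d₂ ^ n) / (1 / d₁ ^ n + 1 / d₂ ^ n) - l1|
        = |l2 - l1| * (d₁ / d₂) ^ n / (1 + (d₁ / d₂) ^ n) := by
    intro n
    rw [key n, abs_div, abs_mul, abs_of_pos (hrp n),
      abs_of_pos (by positivity : (0:ℝ) < 1 + (d₁ / d₂) ^ n)]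
  refine ⟨habs, ?_, ?_⟩
  · intro hne a b hab
    have hc : 0 < |l2 - l1| := abs_pos.mpr (sub_ne_zero.mpr (Ne.symm hne))
    simp only [habs]
    have hlt : (d₁ / d₂) ^ b < (d₁ / d₂) ^ a :=
      Real.rpow_lt_rpow_of_exponent_gt hr0 hr1 hab
    rw [div_lt_div_iff₀ (by positivity) (by positivity)]
    nlinarith [hrp a, hrp b, mul_pos hc (hrp a)]
  · have h0 : Filter.Tendsto (fun n : ℝ => (d₁ / d₂) ^ n) Filter.atTop (nhds 0) :=
      tendsto_rpow_atTop_of_base_lt_one _ (by linarith) hr1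
    have h : Filter.Tendsto
        (fun n : ℝ => |l2 - l1| * (d₁ / d₂) ^ n / (1 + (d₁ / d₂) ^ n))
        Filter.atTop (nhds (|l2 - l1| * 0 / (1 + 0))) :=
      (Filter.Tendsto.mul tendsto_const_nhds h0).div
        (tendsto_const_nhds.add h0) (by norm_num)
    simp only [habs]
    simpa using h
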